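/- arXiv:1609.00790 — 2 statements merged into one kernel-verified Lean document; each statement's English description precedes it below -/
import Mathlib

section
/- Betweenness centrality of sets of vertices is submodular: if S₁ ⊆ S₂ ⊆ V and u ∈ V \ S₂, then B(S₂ ∪ {u}) − B(S₂) ≤ B(S₁ ∪ {u}) − B(S₁). -/
variable {V : Type*} [Fintype V] [DecidableEq V]

/-- A walk is a shortest path: it is a path whose length equals the graph distance. -/
def IsShortestPath (G : SimpleGraph V) {s t : V} (p : G.Walk s t) : Prop :=
  p.IsPath ∧ p.length = G.dist s t

/-- The internal vertices of a walk (its support with the two endpoints removed). -/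
def internals {G : SimpleGraph V} {s t : V} (p : G.Walk s t) : List V :=
  p.support.tail.dropLast

/-- `σ_{s,t}`: the number of shortest `s`-`t` paths. -/
noncomputable def sigma (G : SimpleGraph V) (s t : V) : ℕ :=
  {p : G.Walk s t | IsShortestPath G p}.ncard

/-- `σ_{s,t}(S)`: the number of shortest `s`-`t` paths having an internal vertex in `S`. -/
noncomputable def sigmaSet (G : SimpleGraph V) (S : Finset V) (s t : V) : ℕ :=
  {p : G.Walk s t | IsShortestPath G p ∧ ∃ v ∈ internals p, v ∈ S}.ncard

/-- Betweenness centrality of a set of vertices,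
`B(S) = ∑_{s,t} σ_{s,t}(S) / σ_{s,t}` (terms with `σ_{s,t} = 0` are `0`). -/
noncomputable def bwc (G : SimpleGraph V) (S : Finset V) : ℝ :=
  ∑ s : V, ∑ t : V, (sigmaSet G S s t : ℝ) / (sigma G s t : ℝ)

lemma paths_finite (G : SimpleGraph V) (s t : V) :
    {p : G.Walk s t | p.IsPath}.Finite := by
  classical
  have : {p : G.Walk s t | p.IsPath} = Set.range (fun q : G.Path s t => q.1) := by
    ext p
    constructor
    · intro hp; exact ⟨⟨p, hp⟩, rfl⟩
    · rintro ⟨q, rfl⟩; exact q.2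
  rw [this]
  exact Set.finite_range _

/-- The set of shortest paths not hitting `S` but with `u` as internal vertex. -/
def newSet (G : SimpleGraph V) (S : Finset V) (u s t : V) : Set (G.Walk s t) :=
  {p | IsShortestPath G p ∧ u ∈ internals p ∧ ¬ ∃ v ∈ internals p, v ∈ S}

lemma newSet_finite (G : SimpleGraph V) (S : Finset V) (u s t : V) :
    (newSet G S u s t).Finite :=
  (paths_finite G s t).subset (fun p hp => hp.1.1)

lemma sigmaSet_insert (G : SimpleGraph V) (S : Finset V) (u s t : V) :
    sigmaSet G (insert u S) s t = sigmaSet G S s t + (newSet G S u s t).ncard := by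
  have hsplit : {p : G.Walk s t | IsShortestPath G p ∧ ∃ v ∈ internals p, v ∈ insert u S}
      = {p : G.Walk s t | IsShortestPath G p ∧ ∃ v ∈ internals p, v ∈ S} ∪ newSet G S u s t := by
    ext p
    simp only [Set.mem_setOf_eq, Set.mem_union, newSet, Finset.mem_insert]
    constructor
    · rintro ⟨hsp, v, hv, hvS⟩
      by_cases hS : ∃ v ∈ internals p, v ∈ S
      · exact Or.inl ⟨hsp, hS⟩
      · rcases hvS with rfl | hvS
        · exact Or.inr ⟨hsp, hv, hS⟩
        · exact Or.inl ⟨hsp, v, hv, hvS⟩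
    · rintro (⟨hsp, v, hv, hvS⟩ | ⟨hsp, hv, _⟩)
      · exact ⟨hsp, v, hv, Or.inr hvS⟩
      · exact ⟨hsp, u, hv, Or.inl rfl⟩
  have hdisj : Disjoint {p : G.Walk s t | IsShortestPath G p ∧ ∃ v ∈ internals p, v ∈ S}
      (newSet G S u s t) := by
    rw [Set.disjoint_left]
    rintro p ⟨_, hS⟩ ⟨_, _, hnS⟩
    exact hnS hS
  have hf1 : {p : G.Walk s t | IsShortestPath G p ∧ ∃ v ∈ internals p, v ∈ S}.Finite :=
    (paths_finite G s t).subset (fun p hp => hp.1.1)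
  rw [sigmaSet, hsplit, Set.ncard_union_eq hdisj hf1 (newSet_finite G S u s t)]
  rfl

lemma newSet_anti (G : SimpleGraph V) {S₁ S₂ : Finset V} (h : S₁ ⊆ S₂) (u s t : V) :
    newSet G S₂ u s t ⊆ newSet G S₁ u s t := by
  rintro p ⟨hsp, hv, hnS⟩
  exact ⟨hsp, hv, fun ⟨v, hvi, hvS⟩ => hnS ⟨v, hvi, h hvS⟩⟩

/-- Betweenness centrality of sets of vertices is submodular. -/
theorem bwc_submodular (G : SimpleGraph V) (S₁ S₂ : Finset V) (u : V)
    (h : S₁ ⊆ S₂) (hu : u ∉ S₂) :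
    bwc G (insert u S₂) - bwc G S₂ ≤ bwc G (insert u S₁) - bwc G S₁ := by
  unfold bwc
  rw [← Finset.sum_sub_distrib, ← Finset.sum_sub_distrib]
  apply Finset.sum_le_sum
  intro s _
  rw [← Finset.sum_sub_distrib, ← Finset.sum_sub_distrib]
  apply Finset.sum_le_sum
  intro t _
  rw [sigmaSet_insert G S₂ u s t, sigmaSet_insert G S₁ u s t]
  push_cast
  rw [add_div, add_sub_cancel_left, add_div, add_sub_cancel_left]
  rcases eq_or_ne (sigma G s t) 0 with h0 | h0
  · simp [h0]
  · have hle : ((newSet G S₂ u s t).ncard : ℝ) ≤ (newSet G S₁ u s t).ncard := by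
      exact_mod_cast Set.ncard_le_ncard (newSet_anti G h u s t) (newSet_finite G S₁ u s t)
    have hσ : (0:ℝ) < (sigma G s t : ℝ) := by
      exact_mod_cast Nat.pos_of_ne_zero h0
    gcongr
end

section
/- Every graph of treewidth w on n ≥ 1 vertices has a vertex set S of size at most w+1 whose removal leaves the graph with no connected component of more than (n − |S|)/2 + |S| vertices (a balanced separator). Consequently, for fixed w, a connected graph of treewidth at most w satisfies max_{v∈V} B(v) = Θ(n²). -/
variable {V : Type*} [Fintype V] [DecidableEq V]

/-- A tree decomposition of a graph `G` with index (tree-node) type `ι`. -/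
structure TreeDecomp (V : Type) (G : SimpleGraph V) (ι : Type) where
  T : SimpleGraph ι
  conn : T.Connected
  acyclic : T.IsAcyclic
  bag : ι → Set V
  cover_vertex : ∀ v : V, ∃ i, v ∈ bag i
  cover_edge : ∀ u v : V, G.Adj u v → ∃ i, u ∈ bag i ∧ v ∈ bag i
  coherent : ∀ v : V, ((T.induce {i | v ∈ bag i}).Connected)

/-- `G` has treewidth at most `w`: it has a tree decomposition all of whose bags have at
most `w + 1` vertices. -/
def TreewidthLE (V : Type) (G : SimpleGraph V) (w : ℕ) : Prop :=
  ∃ (ι : Type) (D : TreeDecomp V G ι), ∀ i, (D.bag i).ncard ≤ w + 1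

set_option linter.unusedSectionVars false
set_option maxHeartbeats 1000000

open SimpleGraph

namespace TWaux

section Tree

variable {ι : Type*} [DecidableEq ι] {T : SimpleGraph ι}

lemma isPath_concat {u v x : ι} {p : T.Walk u v} (hp : p.IsPath) (h : T.Adj v x)
    (hx : x ∉ p.support) : (p.concat h).IsPath := by
  rw [← Walk.isPath_reverse_iff, Walk.reverse_concat]
  rw [Walk.cons_isPath_iff]
  refine ⟨Walk.isPath_reverse_iff _ |>.mpr hp, ?_⟩
  rwa [Walk.support_reverse, List.mem_reverse]

/-- The set of tree nodes reachable from `j` by a walk avoiding `i`. -/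
def sideOf (T : SimpleGraph ι) (i j : ι) : Set ι := {x | ∃ p : T.Walk x j, i ∉ p.support}

lemma self_mem_sideOf (i j : ι) : j ∈ sideOf T i j ↔ i ≠ j := by
  constructor
  · rintro ⟨p, hp⟩ rfl; exact hp p.end_mem_support
  · intro h; exact ⟨Walk.nil, by simpa using h⟩

lemma not_self_mem_sideOf (i j : ι) : i ∉ sideOf T i j := by
  rintro ⟨p, hp⟩; exact hp p.start_mem_support

lemma sideOf_disjoint (ha : T.IsAcyclic) {i j : ι} (h : T.Adj i j) :
    sideOf T i j ∩ sideOf T j i = ∅ := by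
  ext x
  simp only [Set.mem_inter_iff, Set.mem_empty_iff_false, iff_false, not_and]
  rintro ⟨p, hp⟩ ⟨q, hq⟩
  have hq' : j ∉ q.bypass.support := fun hj => hq (q.support_bypass_subset hj)
  have hp' : i ∉ p.bypass.support := fun hi => hp (p.support_bypass_subset hi)
  have h1 : (q.bypass.concat h).IsPath := isPath_concat q.bypass_isPath h hq'
  have h2 : p.bypass.IsPath := p.bypass_isPath
  have := isAcyclic_iff_path_unique.mp ha ⟨q.bypass.concat h, h1⟩ ⟨p.bypass, h2⟩
  apply hp'
  have : q.bypass.concat h = p.bypass := congrArg Subtype.val this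
  rw [← this, Walk.support_concat]
  exact List.mem_append.mpr (Or.inl q.bypass.end_mem_support)

lemma sideOf_mono (ha : T.IsAcyclic) {i j k : ι} (hij : T.Adj i j) (hjk : T.Adj j k)
    (hik : i ≠ k) : sideOf T j k ⊆ sideOf T i j := by
  have hi : i ∉ sideOf T j k := by
    rintro ⟨p, hp⟩
    have hp' : j ∉ p.bypass.support := fun hj => hp (p.support_bypass_subset hj)
    have h2 : (Walk.cons hij (Walk.cons hjk Walk.nil)).IsPath := by
      simp [Walk.isPath_def, List.Nodup, hij.ne, hjk.ne, hik]
    have := isAcyclic_iff_path_unique.mp ha ⟨p.bypass, p.bypass_isPath⟩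
      ⟨Walk.cons hij (Walk.cons hjk Walk.nil), h2⟩
    have heq : p.bypass = Walk.cons hij (Walk.cons hjk Walk.nil) := congrArg Subtype.val this
    apply hp'
    rw [heq]
    simp
  rintro x ⟨p, hp⟩
  have hip : i ∉ p.support := by
    intro hmem
    exact hi ⟨p.dropUntil i hmem, fun hj => hp (p.support_dropUntil_subset hmem hj)⟩
  refine ⟨p.concat hjk.symm, ?_⟩
  rw [Walk.support_concat]
  intro hmem
  rcases List.mem_append.mp hmem with h' | h'
  · exact hip h'
  · exact hij.ne (by simpa using h')

lemma sideOf_eq_of_mem {i m m' x : ι} (hx : x ∈ sideOf T i m) (hx' : x ∈ sideOf T i m') :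
    sideOf T i m = sideOf T i m' := by
  obtain ⟨p, hp⟩ := hx
  obtain ⟨p', hp'⟩ := hx'
  ext y
  constructor
  · rintro ⟨q, hq⟩
    refine ⟨(q.append p.reverse).append p', ?_⟩
    simp only [Walk.mem_support_append_iff, Walk.support_reverse, List.mem_reverse]
    push_neg
    exact ⟨⟨hq, hp⟩, hp'⟩
  · rintro ⟨q, hq⟩
    refine ⟨(q.append p'.reverse).append p, ?_⟩
    simp only [Walk.mem_support_append_iff, Walk.support_reverse, List.mem_reverse]
    push_neg
    exact ⟨⟨hq, hp'⟩, hp⟩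

lemma dist_lt_of_side (hc : T.Connected) (ha : T.IsAcyclic) {k l x : ι} (hkl : T.Adj k l)
    (hx : x ∈ sideOf T k l) : T.dist x l < T.dist x k := by
  obtain ⟨p, hp⟩ := hx
  have hkP : k ∉ p.bypass.support := fun hk => hp (p.support_bypass_subset hk)
  have hQ : (p.bypass.concat hkl.symm).IsPath := isPath_concat p.bypass_isPath hkl.symm hkP
  obtain ⟨R, hR⟩ := hc.exists_walk_length_eq_dist x k
  have huniq := isAcyclic_iff_path_unique.mp ha ⟨R.bypass, R.bypass_isPath⟩
    ⟨p.bypass.concat hkl.symm, hQ⟩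
  have hlen : (p.bypass.concat hkl.symm).length ≤ T.dist x k := by
    have : R.bypass = p.bypass.concat hkl.symm := congrArg Subtype.val huniq
    calc (p.bypass.concat hkl.symm).length = R.bypass.length := by rw [this]
      _ ≤ R.length := R.length_bypass_le
      _ = T.dist x k := hR
  have h1 : T.dist x l ≤ p.bypass.length := SimpleGraph.dist_le p.bypass
  rw [Walk.length_concat] at hlen
  omega

end Tree

section Decomp

variable {U : Type} [Fintype U] [DecidableEq U] {G : SimpleGraph U} {ι : Type} [DecidableEq ι]

/-- The set of tree-decomposition nodes whose bag contains `v`. -/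
def nodes (D : TreeDecomp U G ι) (v : U) : Set ι := {i | v ∈ D.bag i}

lemma nodes_nonempty (D : TreeDecomp U G ι) (v : U) : (nodes D v).Nonempty :=
  D.cover_vertex v

/-- Walks in an induced subgraph give walks in the big graph with support inside the set. -/
lemma exists_walk_of_induce {κ : Type*} {H : SimpleGraph κ} {s : Set κ} {a b : ↥s}
    (h : (H.induce s).Reachable a b) :
    ∃ p : H.Walk a.1 b.1, ∀ y ∈ p.support, y ∈ s := by
  obtain ⟨W⟩ := h
  refine ⟨W.map (Embedding.induce s).toHom, ?_⟩
  intro y hy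
  change y ∈ (W.map (Embedding.induce s).toHom : H.Walk _ _).support at hy
  rw [Walk.support_map] at hy
  obtain ⟨z, _, rfl⟩ := List.mem_map.mp hy
  exact z.2

lemma exists_side (D : TreeDecomp U G ι) {v : U} {i : ι} (hv : v ∉ D.bag i) :
    ∃ m, D.T.Adj i m ∧ nodes D v ⊆ sideOf D.T i m := by
  obtain ⟨x, hx⟩ := D.cover_vertex v
  have hxi : i ≠ x := fun h => hv (h ▸ hx)
  obtain ⟨P, hP⟩ : ∃ p : D.T.Walk i x, p.IsPath :=
    (D.conn i x).elim_path fun p => ⟨p.1, p.2⟩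
  obtain ⟨m, hadj, q, rfl⟩ := Walk.exists_eq_cons_of_ne hxi P
  rw [Walk.cons_isPath_iff] at hP
  have hPq := hP
  refine ⟨m, hadj, ?_⟩
  intro y hy
  have hyx : (D.T.induce (nodes D v)).Reachable ⟨y, hy⟩ ⟨x, hx⟩ :=
    (D.coherent v).preconnected _ _
  obtain ⟨p, hp⟩ := exists_walk_of_induce hyx
  refine ⟨p.append q.reverse, ?_⟩
  rw [Walk.mem_support_append_iff]
  rintro (h' | h')
  · exact hv (hp i h')
  · rw [Walk.support_reverse, List.mem_reverse] at h'
    exact hPq.2 h'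

lemma adj_same_side (D : TreeDecomp U G ι) {u v : U} {i m m' : ι} (hG : G.Adj u v)
    (hm : nodes D u ⊆ sideOf D.T i m) (hm' : nodes D v ⊆ sideOf D.T i m') :
    sideOf D.T i m = sideOf D.T i m' := by
  obtain ⟨x, hxu, hxv⟩ := D.cover_edge u v hG
  exact sideOf_eq_of_mem (hm hxu) (hm' hxv)

/-- The set of graph vertices all of whose decomposition nodes lie on side `(i,j)`. -/
def aSet (D : TreeDecomp U G ι) (i j : ι) : Set U := {v : U | nodes D v ⊆ sideOf D.T i j}

noncomputable def wt (D : TreeDecomp U G ι) (i j : ι) : ℕ := (aSet D i j).ncard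

lemma wt_add_le (D : TreeDecomp U G ι) {i j : ι} (h : D.T.Adj i j) :
    wt D i j + wt D j i ≤ Fintype.card U := by
  have hd : Disjoint (aSet D i j) (aSet D j i) := by
    rw [Set.disjoint_left]
    intro v hv hv'
    obtain ⟨x, hx⟩ := nodes_nonempty D v
    have : x ∈ sideOf D.T i j ∩ sideOf D.T j i := ⟨hv hx, hv' hx⟩
    rw [sideOf_disjoint D.acyclic h] at this
    exact this
  calc wt D i j + wt D j i = (aSet D i j ∪ aSet D j i).ncard :=
        (Set.ncard_union_eq hd (Set.toFinite _) (Set.toFinite _)).symm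
    _ ≤ (Set.univ : Set U).ncard := Set.ncard_le_ncard (Set.subset_univ _) Set.finite_univ
    _ = Fintype.card U := by rw [Set.ncard_univ, Nat.card_eq_fintype_card]

/-- A good node: every branch has weight at most `(n + bag size)/2`. -/
def GoodNode (D : TreeDecomp U G ι) (i : ι) : Prop :=
  ∀ m, D.T.Adj i m → 2 * wt D i m ≤ Fintype.card U + (D.bag i).ncard

/-- Canonical witness node used for the termination measure. -/
noncomputable def wit [Nonempty U] (D : TreeDecomp U G ι) (A : Set U) : ι :=
  @dite _ A.Nonempty (Classical.propDecidable _) (fun h => (D.cover_vertex h.some).choose)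
    (fun _ => (D.cover_vertex (Classical.arbitrary U)).choose)

lemma wit_spec [Nonempty U] (D : TreeDecomp U G ι) {A : Set U} (h : A.Nonempty) :
    h.some ∈ D.bag (wit D A) := by
  rw [wit, dif_pos h]
  exact (D.cover_vertex h.some).choose_spec

lemma exists_good [Nonempty U] (D : TreeDecomp U G ι) : ∃ i, GoodNode D i := by
  by_contra hbad
  push_neg at hbad
  simp only [GoodNode, not_forall, not_le] at hbad
  set N := Fintype.card U with hN
  have hN1 : 1 ≤ N := Fintype.card_pos
  -- the key descent, by double strong induction on (weight, distance to the witness)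
  have main : ∀ a b : ℕ, ∀ j k : ι, D.T.Adj j k → N < 2 * wt D j k →
      wt D j k = a → D.T.dist (wit D (aSet D j k)) k = b → False := by
    intro a
    induction a using Nat.strong_induction_on with
    | _ a iha =>
      intro b
      induction b using Nat.strong_induction_on with
      | _ b ihb =>
        intro j k hadj hheavy hwa hdb
        obtain ⟨l, hkl, hlheavy⟩ := hbad k
        have hklheavy : N < 2 * wt D k l := lt_of_le_of_lt (Nat.le_add_right _ _) hlheavy
        have hlj : l ≠ j := by
          rintro rfl
          have := wt_add_le D hadj
          omega
        have hsub : aSet D k l ⊆ aSet D j k := by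
          intro v hv
          exact hv.trans (sideOf_mono D.acyclic hadj hkl (Ne.symm hlj))
        have hwle : wt D k l ≤ wt D j k := Set.ncard_le_ncard hsub (Set.toFinite _)
        rcases lt_or_eq_of_le hwle with hlt | heq
        · exact iha (wt D k l) (hwa ▸ hlt) (D.T.dist (wit D (aSet D k l)) l) k l hkl hklheavy
            rfl rfl
        · have hAeq : aSet D k l = aSet D j k :=
            Set.eq_of_subset_of_ncard_le hsub (le_of_eq heq.symm) (Set.toFinite _)
          have hne : (aSet D j k).Nonempty := by
            apply Set.nonempty_of_ncard_ne_zero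
            intro h0
            rw [wt, h0] at hheavy
            omega
          have hwitmem : hne.some ∈ D.bag (wit D (aSet D j k)) := wit_spec D hne
          have hside : wit D (aSet D j k) ∈ sideOf D.T k l := by
            have hmem : hne.some ∈ aSet D k l := by rw [hAeq]; exact hne.some_mem
            exact hmem hwitmem
          have hdlt : D.T.dist (wit D (aSet D j k)) l < D.T.dist (wit D (aSet D j k)) k :=
            dist_lt_of_side D.conn D.acyclic hkl hside
          refine ihb (D.T.dist (wit D (aSet D k l)) l) ?_ k l hkl hklheavy (heq.trans hwa) rfl
          rw [hAeq]
          omega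
  obtain ⟨i0⟩ : Nonempty ι := ⟨(D.cover_vertex (Classical.arbitrary U)).choose⟩
  obtain ⟨m0, hm0, hheavy0⟩ := hbad i0
  exact main (wt D i0 m0) (D.T.dist (wit D (aSet D i0 m0)) m0) i0 m0 hm0
    (lt_of_le_of_lt (Nat.le_add_right _ _) hheavy0) rfl rfl

lemma part1 (w : ℕ) : ∀ (V : Type) [Fintype V] [DecidableEq V] (G : SimpleGraph V), Nonempty V →
    TreewidthLE V G w →
    ∃ S : Finset V, S.card ≤ w + 1 ∧
      ∀ C : (G.induce ((↑S : Set V)ᶜ)).ConnectedComponent,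
        (C.supp.ncard : ℝ) ≤ ((Fintype.card V : ℝ) - S.card) / 2 + S.card := by
  intro U _ _ G hne htw
  classical
  obtain ⟨ι, D, hb⟩ := htw
  haveI : Nonempty U := hne
  obtain ⟨i₀, hgood⟩ := exists_good D
  refine ⟨(D.bag i₀).toFinite.toFinset, ?_, ?_⟩
  · rw [← Set.ncard_eq_toFinset_card _ (D.bag i₀).toFinite]
    exact hb i₀
  intro C
  have hSc : (↑(D.bag i₀).toFinite.toFinset : Set U) = D.bag i₀ := Set.Finite.coe_toFinset _
  have hcard : ((D.bag i₀).toFinite.toFinset).card = (D.bag i₀).ncard :=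
    (Set.ncard_eq_toFinset_card _ _).symm
  obtain ⟨x, hxC⟩ := C.exists_rep
  have hv : x.1 ∉ D.bag i₀ := by
    have hx2 := x.2
    rw [Set.mem_compl_iff, Finset.mem_coe, ← Set.Finite.mem_toFinset (D.bag i₀).toFinite] at *
    exact fun h => hx2 (by simpa using h)
  obtain ⟨m, him, hTx⟩ := exists_side D hv
  have hwalk : ∀ (a b : ↥((↑(D.bag i₀).toFinite.toFinset : Set U)ᶜ))
      (W : (G.induce _).Walk a b), nodes D b.1 ⊆ sideOf D.T i₀ m →
      nodes D a.1 ⊆ sideOf D.T i₀ m := by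
    intro a b W
    induction W with
    | nil => exact id
    | @cons z z' _ h p ih =>
      intro hb
      have hmid := ih hb
      have hz : z.1 ∉ D.bag i₀ := by
        have hz2 := z.2
        rw [Set.mem_compl_iff, Finset.mem_coe, Set.Finite.mem_toFinset] at hz2
        exact hz2
      obtain ⟨m', him', hTz⟩ := exists_side D hz
      have hGadj : G.Adj z.1 z'.1 := h
      have heq : sideOf D.T i₀ m' = sideOf D.T i₀ m := adj_same_side D hGadj hTz hmid
      exact heq ▸ hTz
  have hsupp : Subtype.val '' C.supp ⊆ aSet D i₀ m := by
    rintro _ ⟨y, hy, rfl⟩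
    rw [ConnectedComponent.mem_supp_iff] at hy
    have hreach := (SimpleGraph.ConnectedComponent.eq).mp (hy.trans hxC.symm)
    obtain ⟨W⟩ := hreach
    exact hwalk y x W hTx
  have h1 : C.supp.ncard = (Subtype.val '' C.supp).ncard :=
    (Set.ncard_image_of_injective _ Subtype.val_injective).symm
  have h2 : (Subtype.val '' C.supp).ncard ≤ wt D i₀ m :=
    Set.ncard_le_ncard hsupp (Set.toFinite _)
  have h3 := hgood m him
  have h4 : 2 * C.supp.ncard ≤ Fintype.card U + (D.bag i₀).ncard := by
    rw [h1]; unfold wt at h2 h3; omega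
  rw [hcard]
  have hcast : (2 : ℝ) * C.supp.ncard ≤ Fintype.card U + (D.bag i₀).ncard := by
    exact_mod_cast h4
  linarith

end Decomp

section Part2

variable {G : SimpleGraph V} {s t : V}

lemma finite_shortest (G : SimpleGraph V) (s t : V) :
    {p : G.Walk s t | IsShortestPath G p}.Finite := by
  classical
  haveI : DecidableRel G.Adj := Classical.decRel _
  apply Set.Finite.subset (Set.toFinite {p : G.Walk s t | p.IsPath ∧ p.length < Fintype.card V})
  intro p hp
  exact ⟨hp.1, hp.1.length_lt⟩

lemma finite_shortestS (G : SimpleGraph V) (S : Finset V) (s t : V) :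
    {p : G.Walk s t | IsShortestPath G p ∧ ∃ v ∈ internals p, v ∈ S}.Finite :=
  (finite_shortest G s t).subset fun _ h => h.1

lemma sigma_pos (hc : G.Connected) (s t : V) : 0 < sigma G s t := by
  obtain ⟨R, hR⟩ := hc.exists_walk_length_eq_dist s t
  classical
  have h1 : R.bypass.length ≤ G.dist s t := hR ▸ R.length_bypass_le
  have h2 : G.dist s t ≤ R.bypass.length := SimpleGraph.dist_le _
  rw [sigma, Set.ncard_pos (finite_shortest G s t)]
  exact ⟨R.bypass, R.bypass_isPath, le_antisymm h1 h2⟩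

lemma sigmaSet_le (G : SimpleGraph V) (S : Finset V) (s t : V) :
    sigmaSet G S s t ≤ sigma G s t :=
  Set.ncard_le_ncard (fun _ h => h.1) (finite_shortest G s t)

lemma term_nonneg (S : Finset V) (s t : V) :
    (0:ℝ) ≤ (sigmaSet G S s t : ℝ) / (sigma G s t : ℝ) := by positivity

lemma term_le_one (S : Finset V) (s t : V) :
    (sigmaSet G S s t : ℝ) / (sigma G s t : ℝ) ≤ 1 := by
  rcases Nat.eq_zero_or_pos (sigma G s t) with h | h
  · have h2 := sigmaSet_le G S s t
    rw [h] at h2 ⊢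
    simp [Nat.le_zero.mp h2]
  · rw [div_le_one (by exact_mod_cast h)]
    exact_mod_cast sigmaSet_le G S s t

lemma bwc_le_sq (G : SimpleGraph V) (S : Finset V) :
    bwc G S ≤ ((Fintype.card V : ℝ)) ^ 2 := by
  calc bwc G S ≤ ∑ _s : V, ∑ _t : V, (1:ℝ) :=
        Finset.sum_le_sum fun s _ => Finset.sum_le_sum fun t _ => term_le_one S s t
    _ = ((Fintype.card V : ℝ)) ^ 2 := by simp [Finset.card_univ, sq]

lemma reach_induce {set : Set V} : ∀ {a b : V} (p : G.Walk a b)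
    (_ : ∀ y ∈ p.support, y ∈ set) (ha : a ∈ set) (hb : b ∈ set),
    (G.induce set).Reachable ⟨a, ha⟩ ⟨b, hb⟩ := by
  intro a b p
  induction p with
  | nil => intro _ ha hb; exact Reachable.refl _
  | @cons a c b h q ih =>
    intro hsup ha hb
    have hc : c ∈ set := hsup c (by simp)
    have hadj : (G.induce set).Adj ⟨a, ha⟩ ⟨c, hc⟩ := h
    exact hadj.reachable.trans (ih (fun y hy => hsup y (by simp [hy])) hc hb)

lemma mem_dropLast_support {c : V} {y : V} : ∀ (q : G.Walk c t), y ∈ q.support → y ≠ t →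
    y ∈ q.support.dropLast := by
  intro q
  induction q with
  | nil => intro h1 h2; simp at h1; exact absurd h1 h2
  | @cons a c' b h q' ih =>
    intro h1 h2
    rw [Walk.support_cons] at h1 ⊢
    rw [List.dropLast_cons_of_ne_nil q'.support_ne_nil]
    rcases List.mem_cons.mp h1 with rfl | h1'
    · exact List.mem_cons_self
    · exact List.mem_cons_of_mem _ (ih h1' h2)

lemma mem_internals_of_mem_support {p : G.Walk s t} {y : V} (hy : y ∈ p.support)
    (hys : y ≠ s) (hyt : y ≠ t) : y ∈ internals p := by
  cases p with
  | nil => simp at hy; exact absurd hy hys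
  | cons h q =>
    rw [Walk.support_cons] at hy
    rcases List.mem_cons.mp hy with rfl | hy'
    · exact absurd rfl hys
    rw [internals, Walk.support_cons, List.tail_cons]
    exact mem_dropLast_support q hy' hyt

lemma crosses (S : Finset V) {s t : V} (hs : s ∈ (↑S : Set V)ᶜ) (ht : t ∈ (↑S : Set V)ᶜ)
    (hdiff : (G.induce (↑S : Set V)ᶜ).connectedComponentMk ⟨s, hs⟩ ≠
      (G.induce (↑S : Set V)ᶜ).connectedComponentMk ⟨t, ht⟩)
    (p : G.Walk s t) : ∃ v ∈ internals p, v ∈ S := by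
  by_contra hno
  push_neg at hno
  have hsup : ∀ y ∈ p.support, y ∈ (↑S : Set V)ᶜ := by
    intro y hy
    by_cases h1 : y = s
    · rwa [h1]
    by_cases h2 : y = t
    · rwa [h2]
    have := hno y (mem_internals_of_mem_support hy h1 h2)
    simpa using this
  exact hdiff (ConnectedComponent.sound (reach_induce p hsup hs ht))

lemma sigmaSet_eq_sigma (S : Finset V) {s t : V} (hs : s ∈ (↑S : Set V)ᶜ)
    (ht : t ∈ (↑S : Set V)ᶜ)
    (hdiff : (G.induce (↑S : Set V)ᶜ).connectedComponentMk ⟨s, hs⟩ ≠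
      (G.induce (↑S : Set V)ᶜ).connectedComponentMk ⟨t, ht⟩) :
    sigmaSet G S s t = sigma G s t := by
  unfold sigmaSet sigma
  congr 1
  ext p
  exact ⟨fun h => h.1, fun h => ⟨h, crosses S hs ht hdiff p⟩⟩

lemma sigmaSet_subadd (G : SimpleGraph V) (S : Finset V) (s t : V) :
    sigmaSet G S s t ≤ ∑ v ∈ S, sigmaSet G {v} s t := by
  classical
  induction S using Finset.induction with
  | empty =>
    have : {p : G.Walk s t | IsShortestPath G p ∧ ∃ v ∈ internals p, v ∈ (∅ : Finset V)} = ∅ := by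
      ext p; simp
    simp [sigmaSet, this]
  | @insert a S' ha ih =>
    have hsub : {p : G.Walk s t | IsShortestPath G p ∧ ∃ v ∈ internals p, v ∈ insert a S'} ⊆
        {p : G.Walk s t | IsShortestPath G p ∧ ∃ v ∈ internals p, v ∈ ({a} : Finset V)} ∪
        {p : G.Walk s t | IsShortestPath G p ∧ ∃ v ∈ internals p, v ∈ S'} := by
      rintro p ⟨hp, v, hv1, hv2⟩
      rcases Finset.mem_insert.mp hv2 with rfl | hv3
      · exact Or.inl ⟨hp, v, hv1, Finset.mem_singleton_self v⟩
      · exact Or.inr ⟨hp, v, hv1, hv3⟩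
    calc sigmaSet G (insert a S') s t
        ≤ ({p : G.Walk s t | IsShortestPath G p ∧ ∃ v ∈ internals p, v ∈ ({a} : Finset V)} ∪
           {p : G.Walk s t | IsShortestPath G p ∧ ∃ v ∈ internals p, v ∈ S'}).ncard :=
          Set.ncard_le_ncard hsub ((finite_shortestS G {a} s t).union (finite_shortestS G S' s t))
      _ ≤ sigmaSet G {a} s t + sigmaSet G S' s t := Set.ncard_union_le _ _
      _ ≤ sigmaSet G {a} s t + ∑ v ∈ S', sigmaSet G {v} s t := by omega
      _ = ∑ v ∈ insert a S', sigmaSet G {v} s t := (Finset.sum_insert (f := fun v => sigmaSet G {v} s t) ha).symm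

lemma bwc_subadd (G : SimpleGraph V) (S : Finset V) : bwc G S ≤ ∑ v ∈ S, bwc G {v} := by
  have key : ∀ s t : V, (sigmaSet G S s t : ℝ) / (sigma G s t : ℝ) ≤
      ∑ v ∈ S, (sigmaSet G {v} s t : ℝ) / (sigma G s t : ℝ) := by
    intro s t
    rw [← Finset.sum_div]
    rcases Nat.eq_zero_or_pos (sigma G s t) with h0 | hpos
    · simp [h0]
    · gcongr
      exact_mod_cast sigmaSet_subadd G S s t
  calc bwc G S ≤ ∑ s : V, ∑ t : V, ∑ v ∈ S, (sigmaSet G {v} s t : ℝ) / (sigma G s t : ℝ) :=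
        Finset.sum_le_sum fun s _ => Finset.sum_le_sum fun t _ => key s t
    _ = ∑ s : V, ∑ v ∈ S, ∑ t : V, (sigmaSet G {v} s t : ℝ) / (sigma G s t : ℝ) :=
        Finset.sum_congr rfl fun s _ => Finset.sum_comm
    _ = ∑ v ∈ S, bwc G {v} := Finset.sum_comm

end Part2

lemma part2 (w : ℕ) :
    ∃ c₁ c₂ : ℝ, ∃ n₀ : ℕ, 0 < c₁ ∧ 0 < c₂ ∧
      ∀ (V : Type) [Fintype V] [DecidableEq V] (G : SimpleGraph V), G.Connected →
        TreewidthLE V G w → n₀ ≤ Fintype.card V →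
        (∃ v : V, c₁ * (Fintype.card V : ℝ) ^ 2 ≤ bwc G {v}) ∧
        ∀ v : V, bwc G {v} ≤ c₂ * (Fintype.card V : ℝ) ^ 2 := by
  refine ⟨1 / (8 * ((w : ℝ) + 1)), 1, 12 * (w + 1), by positivity, one_pos, ?_⟩
  intro U _ _ G hconn htw hcard
  classical
  have h12 : 0 < 12 * (w + 1) := by positivity
  have hNpos : 0 < Fintype.card U := lt_of_lt_of_le h12 hcard
  haveI hne : Nonempty U := Fintype.card_pos_iff.mp hNpos
  refine ⟨?_, fun v => by rw [one_mul]; exact bwc_le_sq G {v}⟩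
  obtain ⟨S, hScard, hComp⟩ := part1 w U G hne htw
  set N : ℝ := (Fintype.card U : ℝ) with hN
  have hNge : (12 : ℝ) * ((w : ℝ) + 1) ≤ N := by
    rw [hN]; exact_mod_cast hcard
  have hs₀ : (S.card : ℝ) ≤ (w : ℝ) + 1 := by exact_mod_cast hScard
  have hs₀0 : (0 : ℝ) ≤ (S.card : ℝ) := by positivity
  set L : ℝ := (N - S.card) - ((N - S.card) / 2 + S.card) with hL
  -- inner bound for each s outside S
  have inner : ∀ s : U, s ∉ S →
      L ≤ ∑ t : U, (sigmaSet G S s t : ℝ) / (sigma G s t : ℝ) := by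
    intro s hs
    have hsmem : s ∈ (↑S : Set U)ᶜ := by simpa using hs
    set comp := (G.induce (↑S : Set U)ᶜ).connectedComponentMk ⟨s, hsmem⟩ with hcompdef
    set B : Set U := Subtype.val '' comp.supp with hB
    set good : Set U := (↑S : Set U)ᶜ \ B with hgood
    have hBsub : B ⊆ (↑S : Set U)ᶜ := by rintro _ ⟨y, _, rfl⟩; exact y.2
    have hBcard : (B.ncard : ℝ) ≤ (N - S.card) / 2 + S.card := by
      rw [hB, Set.ncard_image_of_injective _ Subtype.val_injective]
      exact hComp comp
    have hcompl : (((↑S : Set U)ᶜ.ncard : ℕ) : ℝ) = N - S.card := by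
      have h1 := Set.ncard_add_ncard_compl (↑S : Set U)
      rw [Set.ncard_coe_finset, Nat.card_eq_fintype_card] at h1
      have h2 : ((S.card + (↑S : Set U)ᶜ.ncard : ℕ) : ℝ) = N := by rw [h1]
      push_cast at h2
      linarith
    have hgoodcard : L ≤ (good.ncard : ℝ) := by
      have hle : B.ncard ≤ (↑S : Set U)ᶜ.ncard := Set.ncard_le_ncard hBsub (Set.toFinite _)
      rw [hgood, Set.ncard_diff hBsub, Nat.cast_sub hle]
      rw [hL]
      linarith [hBcard, hcompl.le, hcompl.ge]
    have hterm : ∀ t : U, t ∈ good →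
        (1 : ℝ) ≤ (sigmaSet G S s t : ℝ) / (sigma G s t : ℝ) := by
      intro t ht
      have htS : t ∈ (↑S : Set U)ᶜ := ht.1
      have htcomp : (G.induce (↑S : Set U)ᶜ).connectedComponentMk ⟨s, hsmem⟩ ≠
          (G.induce (↑S : Set U)ᶜ).connectedComponentMk ⟨t, htS⟩ := by
        intro hEq
        exact ht.2 ⟨⟨t, htS⟩, by rw [ConnectedComponent.mem_supp_iff, hcompdef]; exact hEq.symm, rfl⟩
      have hσ : ((sigma G s t : ℕ) : ℝ) ≠ 0 := by
        have := sigma_pos hconn s t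
        positivity
      rw [sigmaSet_eq_sigma S hsmem htS htcomp, div_self hσ]
    have hind : ∑ t : U, (if t ∈ good then (1 : ℝ) else 0) = (good.ncard : ℝ) := by
      rw [Finset.sum_boole]
      congr 1
      rw [Set.ncard_eq_toFinset_card']
      congr 1
      ext a
      simp [Set.mem_toFinset]
    calc L ≤ (good.ncard : ℝ) := hgoodcard
      _ = ∑ t : U, (if t ∈ good then (1 : ℝ) else 0) := hind.symm
      _ ≤ ∑ t : U, (sigmaSet G S s t : ℝ) / (sigma G s t : ℝ) := by
          refine Finset.sum_le_sum fun t _ => ?_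
          by_cases h : t ∈ good
          · rw [if_pos h]; exact hterm t h
          · rw [if_neg h]; exact term_nonneg S s t
  -- outer bound
  have houter : (N - S.card) * L ≤ bwc G S := by
    have hcompl2 : ((Sᶜ : Finset U).card : ℝ) = N - S.card := by
      rw [Finset.card_compl, Nat.cast_sub (Finset.card_le_univ S)]
    calc (N - S.card) * L = ∑ _s ∈ (Sᶜ : Finset U), L := by
          rw [Finset.sum_const, nsmul_eq_mul, hcompl2]
      _ ≤ ∑ s ∈ (Sᶜ : Finset U), ∑ t : U, (sigmaSet G S s t : ℝ) / (sigma G s t : ℝ) :=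
          Finset.sum_le_sum fun s hsmem => inner s (Finset.mem_compl.mp hsmem)
      _ ≤ ∑ s : U, ∑ t : U, (sigmaSet G S s t : ℝ) / (sigma G s t : ℝ) := by
          refine Finset.sum_le_sum_of_subset_of_nonneg (Finset.subset_univ _) ?_
          intro s _ _
          exact Finset.sum_nonneg fun t _ => term_nonneg S s t
      _ = bwc G S := rfl
  -- numeric bound
  have hKN : (w : ℝ) + 1 ≤ N / 12 := by linarith
  have h1 : N / 2 ≤ N - S.card := by linarith
  have h2 : N / 4 ≤ L := by rw [hL]; linarith
  have hbig : N ^ 2 / 8 ≤ bwc G S := by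
    have hprod : N / 2 * (N / 4) ≤ (N - S.card) * L := by
      have hN0 : (0 : ℝ) ≤ N := by positivity
      nlinarith
    have heq : N / 2 * (N / 4) = N ^ 2 / 8 := by ring
    have h3 : N ^ 2 / 8 ≤ (N - S.card) * L := heq ▸ hprod
    exact h3.trans houter
  -- extract a single vertex
  have hSne : S.Nonempty := by
    rcases Finset.eq_empty_or_nonempty S with rfl | h
    · exfalso
      have hz : bwc G (∅ : Finset U) ≤ 0 := by
        have : ∀ s t : U, (sigmaSet G (∅ : Finset U) s t : ℝ) / (sigma G s t : ℝ) = 0 := by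
          intro s t
          have he : {p : G.Walk s t | IsShortestPath G p ∧ ∃ v ∈ internals p,
              v ∈ (∅ : Finset U)} = ∅ := by ext p; simp
          rw [sigmaSet, he]
          simp
        unfold bwc
        rw [Finset.sum_congr rfl fun s _ => Finset.sum_congr rfl fun t _ => this s t]
        simp
      have hN12 : (12 : ℝ) ≤ N := by nlinarith
      nlinarith
    · exact h
  by_contra hnov
  push_neg at hnov
  have hsum : ∑ v ∈ S, bwc G {v} < ∑ _v ∈ S, 1 / (8 * ((w : ℝ) + 1)) * N ^ 2 :=
    Finset.sum_lt_sum_of_nonempty hSne fun v _ => hnov v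
  rw [Finset.sum_const, nsmul_eq_mul] at hsum
  have hcc : (S.card : ℝ) * (1 / (8 * ((w : ℝ) + 1)) * N ^ 2) ≤ N ^ 2 / 8 := by
    have hX : (0 : ℝ) ≤ 1 / (8 * ((w : ℝ) + 1)) * N ^ 2 := by positivity
    have hm := mul_le_mul_of_nonneg_right hs₀ hX
    have heq : ((w : ℝ) + 1) * (1 / (8 * ((w : ℝ) + 1)) * N ^ 2) = N ^ 2 / 8 := by
      have hw1 : ((w : ℝ) + 1) ≠ 0 := by positivity
      field_simp
    linarith
  have := bwc_subadd G S
  linarith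

end TWaux


/-- Every graph of treewidth at most `w` on `n ≥ 1` vertices has a balanced separator `S`
of size at most `w + 1`: removing `S` leaves no connected component with more than
`(n − |S|)/2 + |S|` vertices.  Consequently, for fixed `w`, connected graphs of treewidth
at most `w` have maximum vertex betweenness centrality `Θ(n²)`. -/
theorem treewidth_balanced_separator_and_betweenness (w : ℕ) :
    (∀ (V : Type) [Fintype V] [DecidableEq V] (G : SimpleGraph V), Nonempty V →
      TreewidthLE V G w →
      ∃ S : Finset V, S.card ≤ w + 1 ∧
        ∀ C : (G.induce ((↑S : Set V)ᶜ)).ConnectedComponent,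
          (C.supp.ncard : ℝ) ≤ ((Fintype.card V : ℝ) - S.card) / 2 + S.card) ∧
    ∃ c₁ c₂ : ℝ, ∃ n₀ : ℕ, 0 < c₁ ∧ 0 < c₂ ∧
      ∀ (V : Type) [Fintype V] [DecidableEq V] (G : SimpleGraph V), G.Connected →
        TreewidthLE V G w → n₀ ≤ Fintype.card V →
        (∃ v : V, c₁ * (Fintype.card V : ℝ) ^ 2 ≤ bwc G {v}) ∧
        ∀ v : V, bwc G {v} ≤ c₂ * (Fintype.card V : ℝ) ^ 2 :=
  ⟨TWaux.part1 w, TWaux.part2 w⟩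
end
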